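/- arXiv:2101.06494 — 2 statements merged into one kernel-verified Lean document; each statement's English description precedes it below -/
import Mathlib

section
/- Let X be a real random variable with the Gaussian distribution N(μ, σ²), σ > 0, and fix r > 0. If c₁, c₂ ∈ ℝ satisfy |c₁ − μ| ≤ |c₂ − μ|, then P(|X − c₂| ≤ r) ≤ P(|X − c₁| ≤ r). That is, the Gaussian probability of an interval of fixed length 2r centered at c is nonincreasing in the distance of c from the mean μ. -/
open ProbabilityTheory MeasureTheory Set Real
open scoped NNReal

/-!
The Gaussian density `p` is symmetric about `μ` and nonincreasing in `|x - μ|`. Reflection through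
`μ` moves the center `c` to `μ + |c - μ|` without changing `∫_{c-r}^{c+r} p`, and for `c ≥ μ` the
derivative of `c ↦ ∫_{c-r}^{c+r} p` is `p (c + r) - p (c - r) ≤ 0`, since `c + r` is at least as far
from `μ` as `c - r`.
-/

def IsSymmUnimodalAbout (f : ℝ → ℝ) (m : ℝ) : Prop :=
  ∀ ⦃x y : ℝ⦄, |y - m| ≤ |x - m| → f x ≤ f y

namespace IsSymmUnimodalAbout

variable {f : ℝ → ℝ} {m : ℝ}

theorem apply_two_mul_sub (hf : IsSymmUnimodalAbout f m) (x : ℝ) : f (2 * m - x) = f x := by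
  have h : |2 * m - x - m| = |x - m| := by rw [← abs_neg]; ring_nf
  exact le_antisymm (hf h.ge) (hf h.le)

end IsSymmUnimodalAbout

section IntervalAroundCenter

variable {f : ℝ → ℝ} {m r : ℝ}

theorem intervalIntegral_reflect_center (hf : ∀ x, f (2 * m - x) = f x) (c : ℝ) :
    ∫ x in (2 * m - c - r)..(2 * m - c + r), f x = ∫ x in (c - r)..(c + r), f x := by
  have h := intervalIntegral.integral_comp_sub_left (a := c - r) (b := c + r) f (2 * m)
  simp only [hf] at h
  rw [h]
  ring_nf

theorem hasDerivAt_intervalIntegral_center (hf : Continuous f) (r c : ℝ) :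
    HasDerivAt (fun c ↦ ∫ x in (c - r)..(c + r), f x) (f (c + r) - f (c - r)) c := by
  have hprim (a : ℝ) : HasDerivAt (fun u ↦ ∫ x in 0..u, f x) (f a) a :=
    (hf.integral_hasStrictDerivAt 0 a).hasDerivAt
  have hsplit : (fun c ↦ ∫ x in (c - r)..(c + r), f x) =
      fun c ↦ (∫ x in 0..(c + r), f x) - ∫ x in 0..(c - r), f x := funext fun c ↦
    (intervalIntegral.integral_interval_sub_left (hf.intervalIntegrable _ _)
      (hf.intervalIntegrable _ _)).symm
  rw [hsplit]
  exact (hprim (c + r)).comp_add_const.sub (hprim (c - r)).comp_sub_const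

theorem antitoneOn_intervalIntegral_center (hcont : Continuous f) (hf : IsSymmUnimodalAbout f m)
    (hr : 0 ≤ r) : AntitoneOn (fun c ↦ ∫ x in (c - r)..(c + r), f x) (Ici m) := by
  have hderiv (c : ℝ) := hasDerivAt_intervalIntegral_center hcont r c
  refine antitoneOn_of_deriv_nonpos (convex_Ici m)
    (fun c _ ↦ (hderiv c).continuousAt.continuousWithinAt)
    (fun c _ ↦ (hderiv c).differentiableAt.differentiableWithinAt) fun c hmc ↦ ?_
  rw [interior_Ici, mem_Ioi] at hmc
  rw [(hderiv c).deriv, sub_nonpos]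
  apply hf
  rw [abs_of_nonneg (by linarith : 0 ≤ c + r - m), abs_le]
  constructor <;> linarith

theorem intervalIntegral_center_le_of_abs_le (hcont : Continuous f)
    (hf : IsSymmUnimodalAbout f m) (hr : 0 ≤ r) {c₁ c₂ : ℝ} (h : |c₁ - m| ≤ |c₂ - m|) :
    ∫ x in (c₂ - r)..(c₂ + r), f x ≤ ∫ x in (c₁ - r)..(c₁ + r), f x := by
  have hfold (c : ℝ) : ∫ x in (c - r)..(c + r), f x =
      ∫ x in (m + |c - m| - r)..(m + |c - m| + r), f x := by
    rcases le_total m c with hmc | hcm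
    · rw [abs_of_nonneg (sub_nonneg.2 hmc), add_sub_cancel]
    · rw [abs_of_nonpos (sub_nonpos.2 hcm), ← intervalIntegral_reflect_center hf.apply_two_mul_sub]
      ring_nf
  rw [hfold c₁, hfold c₂]
  exact antitoneOn_intervalIntegral_center hcont hf hr (by simp) (by simp) (by linarith)

end IntervalAroundCenter

namespace ProbabilityTheory

variable (μ : ℝ) (v : ℝ≥0)

theorem continuous_gaussianPDFReal : Continuous (gaussianPDFReal μ v) := by
  rw [gaussianPDFReal_def]
  fun_prop

theorem isSymmUnimodalAbout_gaussianPDFReal : IsSymmUnimodalAbout (gaussianPDFReal μ v) μ := by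
  intro x y h
  rw [gaussianPDFReal, gaussianPDFReal]
  have hsq : (y - μ) ^ 2 ≤ (x - μ) ^ 2 := sq_le_sq.2 h
  gcongr _ * rexp (-?_ / _)

theorem gaussianReal_closedBall (hv : v ≠ 0) (c : ℝ) {r : ℝ} (hr : 0 ≤ r) :
    gaussianReal μ v (Metric.closedBall c r) =
      ENNReal.ofReal (∫ x in (c - r)..(c + r), gaussianPDFReal μ v x) := by
  rw [gaussianReal_apply_eq_integral μ hv, Real.closedBall_eq_Icc, integral_Icc_eq_integral_Ioc,
    intervalIntegral.integral_of_le (by linarith)]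

end ProbabilityTheory

/-- For a Gaussian `N(μ, σ²)` with `σ > 0` and fixed `r > 0`, the probability of the
interval of half-length `r` centered at `c` is nonincreasing in the distance `|c - μ|`. -/
theorem gaussian_interval_monotone_in_center_distance (μ σ : ℝ) (hσ : 0 < σ)
    (r : ℝ) (hr : 0 < r) (c₁ c₂ : ℝ) (hc : |c₁ - μ| ≤ |c₂ - μ|) :
    gaussianReal μ ⟨σ ^ 2, by positivity⟩ {x | |x - c₂| ≤ r}
      ≤ gaussianReal μ ⟨σ ^ 2, by positivity⟩ {x | |x - c₁| ≤ r} := by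
  have hv : (⟨σ ^ 2, by positivity⟩ : ℝ≥0) ≠ 0 := fun h ↦
    pow_ne_zero 2 hσ.ne' (congrArg Subtype.val h)
  have hball (c : ℝ) : {x : ℝ | |x - c| ≤ r} = Metric.closedBall c r := by
    ext; simp [Real.dist_eq]
  rw [hball, hball, gaussianReal_closedBall μ _ hv _ hr.le, gaussianReal_closedBall μ _ hv _ hr.le]
  exact ENNReal.ofReal_le_ofReal <| intervalIntegral_center_le_of_abs_le
    (continuous_gaussianPDFReal μ _) (isSymmUnimodalAbout_gaussianPDFReal μ _) hr.le hc
end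

section
/- Let d ≥ 1, σ > 0, and μ ∈ ℝ^d, and let X = (X₁,…,X_d) have independent coordinates with Xᵢ ~ N(μᵢ, σ²) (the isotropic Gaussian distribution on ℝ^d with mean μ and covariance σ²I). Then for every r > 0 and every c ∈ ℝ^d, P(‖X − c‖ ≤ r) ≤ P(‖X − μ‖ ≤ r), where ‖·‖ is the Euclidean norm. That is, the isotropic Gaussian measure of a Euclidean ball of fixed radius is maximized when the ball is centered at the mean. -/
/-!
In one dimension the Gaussian density is symmetric and unimodal about its mean, so sliding an
interval of fixed length towards the mean can only increase its mass. In `ℝ^d` the ball's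
slice in each coordinate direction is such an interval, and by Fubini for the product measure,
moving one coordinate of the centre to the mean increases the mass of the ball. Doing this one
coordinate at a time moves the centre to the mean.
-/

open ProbabilityTheory MeasureTheory
open Metric Set Function
open scoped NNReal

def IsSymmetricUnimodal (f : ℝ → ℝ) (m : ℝ) : Prop :=
  ∀ x y, |x - m| ≤ |y - m| → f y ≤ f x

namespace IsSymmetricUnimodal

variable {f : ℝ → ℝ} {m : ℝ}

lemma apply_two_mul_sub (hf : IsSymmetricUnimodal f m) (x : ℝ) : f (2 * m - x) = f x := by
  have h : |2 * m - x - m| = |x - m| := by rw [← abs_neg]; ring_nf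
  exact le_antisymm (hf _ _ h.ge) (hf _ _ h.le)

lemma intervalIntegral_le_of_le (hf : IsSymmetricUnimodal f m) (hcont : Continuous f)
    {s : ℝ} (hs : 0 ≤ s) {a : ℝ} (ha : m ≤ a) :
    ∫ x in (a - s)..(a + s), f x ≤ ∫ x in (m - s)..(m + s), f x := by
  have hint : ∀ u v, IntervalIntegrable f volume u v := hcont.intervalIntegrable
  rw [← intervalIntegral.integral_add_adjacent_intervals (hint (a - s) (m + s)) (hint _ (a + s)),
    ← intervalIntegral.integral_add_adjacent_intervals (hint (m - s) (a - s)) (hint _ (m + s)),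
    add_comm, add_le_add_iff_right]
  -- shifting `[m + s, a + s]` to the left by `2 * s` moves every point closer to `m`
  calc ∫ x in (m + s)..(a + s), f x ≤ ∫ x in (m + s)..(a + s), f (x - 2 * s) := by
        refine intervalIntegral.integral_mono_on (by linarith) (hint _ _)
          ((hcont.comp (continuous_sub_right _)).intervalIntegrable _ _) fun x hx => hf _ _ ?_
        rw [abs_of_nonneg (by linarith [hx.1] : 0 ≤ x - m), abs_le]
        constructor <;> linarith [hx.1]
    _ = ∫ x in (m - s)..(a - s), f x := by
        rw [intervalIntegral.integral_comp_sub_right]; ring_nf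

lemma intervalIntegral_le (hf : IsSymmetricUnimodal f m) (hcont : Continuous f)
    {s : ℝ} (hs : 0 ≤ s) (a : ℝ) :
    ∫ x in (a - s)..(a + s), f x ≤ ∫ x in (m - s)..(m + s), f x := by
  rcases le_total m a with ha | ha
  · exact hf.intervalIntegral_le_of_le hcont hs ha
  have hreflect : ∫ x in (a - s)..(a + s), f x
      = ∫ x in (2 * m - a - s)..(2 * m - a + s), f x :=
    calc ∫ x in (a - s)..(a + s), f x = ∫ x in (a - s)..(a + s), f (2 * m - x) := by
          simp only [hf.apply_two_mul_sub]
      _ = ∫ x in (2 * m - (a + s))..(2 * m - (a - s)), f x :=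
          intervalIntegral.integral_comp_sub_left _ _
      _ = _ := by ring_nf
  rw [hreflect]
  exact hf.intervalIntegral_le_of_le hcont hs (by linarith)

end IsSymmetricUnimodal

lemma isSymmetricUnimodal_gaussianPDFReal (m : ℝ) (v : ℝ≥0) :
    IsSymmetricUnimodal (gaussianPDFReal m v) m := fun x y h => by
  simp only [gaussianPDFReal]
  gcongr ?_ * Real.exp (-?_ / _)
  exact sq_le_sq.2 h

lemma gaussianReal_closedBall_le (m : ℝ) (v : ℝ≥0) (a s : ℝ) :
    gaussianReal m v (closedBall a s) ≤ gaussianReal m v (closedBall m s) := by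
  rcases lt_or_ge s 0 with hs | hs
  · simp [hs]
  rcases eq_or_ne v 0 with rfl | hv
  · simpa [hs] using prob_le_one (μ := Measure.dirac m) (s := closedBall a s)
  have hball : ∀ b, gaussianReal m v (closedBall b s)
      = ENNReal.ofReal (∫ x in (b - s)..(b + s), gaussianPDFReal m v x) := fun b => by
    rw [gaussianReal_apply_eq_integral _ hv, Real.closedBall_eq_Icc, integral_Icc_eq_integral_Ioc,
      ← intervalIntegral.integral_of_le (by linarith)]
  rw [hball, hball]
  exact ENNReal.ofReal_le_ofReal <| (isSymmetricUnimodal_gaussianPDFReal m v).intervalIntegral_le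
    (by rw [gaussianPDFReal_def]; fun_prop) hs a

lemma measure_setOf_sq_sub_le_le {ν : Measure ℝ} {b : ℝ}
    (h : ∀ a s, ν (closedBall a s) ≤ ν (closedBall b s)) (a t : ℝ) :
    ν {y | (y - a) ^ 2 ≤ t} ≤ ν {y | (y - b) ^ 2 ≤ t} := by
  rcases lt_or_ge t 0 with ht | ht
  · have hempty : {y : ℝ | (y - a) ^ 2 ≤ t} = ∅ :=
      eq_empty_of_forall_notMem fun y hy => (sq_nonneg (y - a)).not_gt (hy.trans_lt ht)
    simp [hempty]
  have hball : ∀ a, {y : ℝ | (y - a) ^ 2 ≤ t} = closedBall a √t := fun a => by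
    ext y
    rw [mem_closedBall, Real.dist_eq, Real.le_sqrt (abs_nonneg _) ht, sq_abs, mem_ofPred_eq]
  rw [hball, hball]
  exact h a √t

lemma MeasureTheory.Measure.pi_le_pi_of_slice_le {ι : Type*} [Fintype ι] [DecidableEq ι] {X : ι → Type*}
    [∀ i, MeasurableSpace (X i)] {ν : ∀ i, Measure (X i)} [∀ i, SigmaFinite (ν i)]
    {S T : Set (∀ i, X i)} (hS : MeasurableSet S) (hT : MeasurableSet T) (i : ι)
    (h : ∀ x, ν i (update x i ⁻¹' S) ≤ ν i (update x i ⁻¹' T)) :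
    Measure.pi ν S ≤ Measure.pi ν T := by
  have hslice : ∀ {U : Set (∀ i, X i)}, MeasurableSet U → ∀ x,
      (∫⋯∫⁻_{i}, U.indicator 1 ∂ν) x = ν i (update x i ⁻¹' U) := fun hU x => by
    rw [lmarginal_singleton, ← lintegral_indicator_one (measurable_update x hU)]
    rfl
  rw [← lintegral_indicator_one hS, ← lintegral_indicator_one hT]
  refine lintegral_le_of_lmarginal_le {i} (measurable_one.indicator hS)
    (measurable_one.indicator hT) fun x => ?_
  rw [hslice hS, hslice hT]
  exact h x

section SumSq

variable {ι : Type*} [Fintype ι]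

lemma measurableSet_setOf_sum_sq_le (c : ι → ℝ) (t : ℝ) :
    MeasurableSet {x : ι → ℝ | ∑ j, (x j - c j) ^ 2 ≤ t} :=
  measurableSet_le (by fun_prop) measurable_const

variable [DecidableEq ι]

lemma preimage_update_setOf_sum_sq_le (x c : ι → ℝ) (i : ι) (t : ℝ) :
    update x i ⁻¹' {z | ∑ j, (z j - c j) ^ 2 ≤ t}
      = {y | (y - c i) ^ 2 ≤ t - ∑ j ∈ Finset.univ.erase i, (x j - c j) ^ 2} := by
  ext y
  simp only [mem_preimage, mem_ofPred_eq, le_sub_iff_add_le]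
  rw [← Finset.add_sum_erase _ _ (Finset.mem_univ i), update_self,
    Finset.sum_congr rfl fun j hj => by rw [update_of_ne (Finset.ne_of_mem_erase hj)]]

variable {ν : ι → Measure ℝ} [∀ i, SigmaFinite (ν i)]

lemma pi_setOf_sum_sq_le_le_update {i : ι} {b : ℝ}
    (hν : ∀ a s, ν i (closedBall a s) ≤ ν i (closedBall b s)) (c : ι → ℝ) (t : ℝ) :
    Measure.pi ν {x | ∑ j, (x j - c j) ^ 2 ≤ t}
      ≤ Measure.pi ν {x | ∑ j, (x j - update c i b j) ^ 2 ≤ t} := by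
  refine Measure.pi_le_pi_of_slice_le (measurableSet_setOf_sum_sq_le _ _)
    (measurableSet_setOf_sum_sq_le _ _) i fun x => ?_
  have hrest : ∑ j ∈ Finset.univ.erase i, (x j - update c i b j) ^ 2
      = ∑ j ∈ Finset.univ.erase i, (x j - c j) ^ 2 :=
    Finset.sum_congr rfl fun j hj => by rw [update_of_ne (Finset.ne_of_mem_erase hj)]
  rw [preimage_update_setOf_sum_sq_le, preimage_update_setOf_sum_sq_le, update_self, hrest]
  exact measure_setOf_sq_sub_le_le hν _ _

lemma pi_setOf_sum_sq_le_le_piecewise {m : ι → ℝ}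
    (hν : ∀ i a s, ν i (closedBall a s) ≤ ν i (closedBall (m i) s)) (c : ι → ℝ) (t : ℝ)
    (s : Finset ι) :
    Measure.pi ν {x | ∑ j, (x j - c j) ^ 2 ≤ t}
      ≤ Measure.pi ν {x | ∑ j, (x j - s.piecewise m c j) ^ 2 ≤ t} := by
  induction s using Finset.induction_on with
  | empty => simp only [Finset.piecewise_empty, le_refl]
  | insert i s _ ih =>
    rw [Finset.piecewise_insert]
    exact ih.trans (pi_setOf_sum_sq_le_le_update (hν i) _ t)

lemma pi_setOf_sum_sq_le_le_center {m : ι → ℝ}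
    (hν : ∀ i a s, ν i (closedBall a s) ≤ ν i (closedBall (m i) s)) (c : ι → ℝ) (t : ℝ) :
    Measure.pi ν {x | ∑ j, (x j - c j) ^ 2 ≤ t} ≤ Measure.pi ν {x | ∑ j, (x j - m j) ^ 2 ≤ t} := by
  simpa only [Finset.piecewise_univ] using pi_setOf_sum_sq_le_le_piecewise hν c t Finset.univ

end SumSq

/-- For the isotropic Gaussian on `ℝ^d` with mean `μ` and covariance `σ²I` (the product of
one-dimensional Gaussians `N(μᵢ, σ²)`), the measure of a Euclidean ball of fixed radius
`r > 0` is maximized when the ball is centered at the mean. -/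
theorem isotropic_gaussian_ball_max_at_mean (d : ℕ) (σ : ℝ)
    (μ : Fin d → ℝ) (r : ℝ) (hr : 0 < r) (c : Fin d → ℝ) :
    (Measure.pi fun i : Fin d => gaussianReal (μ i) ⟨σ ^ 2, by positivity⟩)
        {x | Real.sqrt (∑ i, (x i - c i) ^ 2) ≤ r}
      ≤ (Measure.pi fun i : Fin d => gaussianReal (μ i) ⟨σ ^ 2, by positivity⟩)
        {x | Real.sqrt (∑ i, (x i - μ i) ^ 2) ≤ r} := by
  have hsqrt : ∀ b : Fin d → ℝ, {x : Fin d → ℝ | √(∑ i, (x i - b i) ^ 2) ≤ r}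
      = {x | ∑ i, (x i - b i) ^ 2 ≤ r ^ 2} := fun b => by
    ext x
    simp only [mem_ofPred_eq, Real.sqrt_le_iff, hr.le, true_and]
  rw [hsqrt, hsqrt]
  exact pi_setOf_sum_sq_le_le_center (fun i => gaussianReal_closedBall_le (μ i) _) c (r ^ 2)
end
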